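/- For any arc diagram D on n vertices in which every vertex has at most one left arc, p_1↑_D = p_{π(D)}, where π(D) is the set partition of [n] whose blocks are the connected components of D (vertices joined by arcs). Consequently, if D₁ and D₂ are two such arc diagrams with π(D₁) = π(D₂), then e_1↑_{D₁} = e_1↑_{D₂}. -/
import Mathlib


open scoped Classical

/-- Formal power series in the non-commuting variables `x 0, x 1, x 2, …` over `ℚ`,
represented by their coefficient function on words. -/
abbrev NCS : Type := List ℕ → ℚ

/-- Product of two series in non-commuting variables (Cauchy product on words). -/
noncomputable def ncMul (f g : NCS) : NCS := fun w =>
  ∑ i ∈ Finset.range (w.length + 1), f (w.take i) * g (w.drop i)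

/-- `p₁ = e₁ = x_1 + x_2 + ⋯`. -/
noncomputable def p1 : NCS := fun w => if w.length = 1 then 1 else 0

/-- The power-sum function in non-commuting variables indexed by a set partition
(setoid) `π` of `[n]`. -/
noncomputable def pSP (n : ℕ) (π : Setoid (Fin n)) : NCS := fun w =>
  if h : w.length = n then
    (if ∀ j k : Fin n, π.r j k →
        w.get (Fin.cast h.symm j) = w.get (Fin.cast h.symm k) then 1 else 0)
  else 0

/-- The induced series `f↑_j` (positions are 1-based): append a copy of the `j`-th
variable at the end of each monomial; extended linearly. -/
noncomputable def induce (f : NCS) (j : ℕ) : NCS := fun w =>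
  if 1 ≤ j ∧ j + 1 ≤ w.length ∧ w.getLast? = (w.dropLast)[j - 1]? then f w.dropLast else 0

/-- `f↑_j^m`: for `j < m` this appends a copy of the `j`-th variable, and
`f↑_m^m = f ⬝ p₁`. -/
noncomputable def induceFull (f : NCS) (j m : ℕ) : NCS :=
  if j = m then ncMul f p1 else induce f j

/-- `↑_D` for an arc diagram `D` on vertices `0, …, n-1` encoded by `d` with `d j ≤ j`
(arc `(d j, j)` when `d j < j`, no left arc at `j` when `d j = j`):
the sequence of inducings `↑_{i_2}^2 ↑_{i_3}^3 ⋯ ↑_{i_n}^n` (1-based). -/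
noncomputable def induceSeq {n : ℕ} (d : Fin n → Fin n) (f : NCS) : NCS :=
  (List.finRange n).foldl
    (fun (g : NCS) (v : Fin n) => if (v : ℕ) = 0 then g
      else induceFull g ((d v : ℕ) + 1) ((v : ℕ) + 1)) f

/-- `π(D)`: the set partition of the vertex set into connected components of the graph
whose edges are the arcs of `D`. -/
def piD {n : ℕ} (d : Fin n → Fin n) : Setoid (Fin n) :=
  Relation.EqvGen.setoid (fun a b => d b = a ∧ a ≠ b)


/-- Partial power-sum after processing vertices `< m`. -/
noncomputable def Pd {n : ℕ} (d : Fin n → Fin n) (m : ℕ) : NCS := fun w =>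
  if w.length = m then
    (if ∀ j : Fin n, (j : ℕ) < m → d j ≠ j → w[(d j : ℕ)]? = w[(j : ℕ)]? then 1 else 0)
  else 0

lemma dropLast_getElem?' (w : List ℕ) (i : ℕ) (hi : i < w.length - 1) :
    w.dropLast[i]? = w[i]? := by
  rw [List.dropLast_eq_take, List.getElem?_take, if_pos hi]

lemma ncMul_p1 (f : NCS) (w : List ℕ) :
    ncMul f p1 w = if 1 ≤ w.length then f w.dropLast else 0 := by
  unfold ncMul p1
  rcases Nat.eq_zero_or_pos w.length with h | h
  · rw [if_neg (by omega)]
    simp [h]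
  · rw [if_pos (show 1 ≤ w.length from h), Finset.sum_eq_single (w.length - 1)]
    · have h1 : (w.drop (w.length - 1)).length = 1 := by
        simp only [List.length_drop]; omega
      rw [← List.dropLast_eq_take, if_pos h1, mul_one]
    · intro i hi hne
      have : (w.drop i).length ≠ 1 := by
        simp only [List.length_drop]
        simp only [Finset.mem_range] at hi
        omega
      rw [if_neg this, mul_zero]
    · intro h'
      exact absurd (Finset.mem_range.mpr (by omega)) h'

lemma step_ncMul {n : ℕ} (d : Fin (n + 1) → Fin (n + 1)) (hd : ∀ j, d j ≤ j) (m : ℕ)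
    (hmn : m < n + 1) (hdm : d ⟨m, hmn⟩ = ⟨m, hmn⟩) :
    ncMul (Pd d m) p1 = Pd d (m + 1) := by
  funext w
  rw [ncMul_p1]
  unfold Pd
  by_cases hw : w.length = m + 1
  · have hdl : w.dropLast.length = m := by simp [hw]
    rw [if_pos (by omega : 1 ≤ w.length), if_pos hdl, if_pos hw]
    congr 1
    apply propext
    constructor
    · intro H j hj hne
      rcases Nat.lt_or_ge (j : ℕ) m with h' | h'
      · have hdj : (d j : ℕ) ≤ (j : ℕ) := Fin.le_def.mp (hd j)
        have := H j h' hne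
        rwa [dropLast_getElem?' _ _ (by omega), dropLast_getElem?' _ _ (by omega)] at this
      · exfalso
        have : j = ⟨m, hmn⟩ := Fin.ext (by simpa using by omega)
        rw [this] at hne
        exact hne hdm
    · intro H j hj hne
      have hdj : (d j : ℕ) ≤ (j : ℕ) := Fin.le_def.mp (hd j)
      rw [dropLast_getElem?' _ _ (by omega), dropLast_getElem?' _ _ (by omega)]
      exact H j (by omega) hne
  · rw [if_neg hw]
    by_cases h0 : 1 ≤ w.length
    · rw [if_pos h0, if_neg (by simp only [List.length_dropLast]; omega)]
    · rw [if_neg h0]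

lemma step_induce {n : ℕ} (d : Fin (n + 1) → Fin (n + 1)) (hd : ∀ j, d j ≤ j) (m : ℕ)
    (hmn : m < n + 1) (hdm : (d ⟨m, hmn⟩ : ℕ) < m) :
    induce (Pd d m) ((d ⟨m, hmn⟩ : ℕ) + 1) = Pd d (m + 1) := by
  funext w
  unfold induce Pd
  set a : ℕ := (d ⟨m, hmn⟩ : ℕ) with ha
  simp only [add_tsub_cancel_right]
  by_cases hw : w.length = m + 1
  · have hdl : w.dropLast.length = m := by simp [hw]
    rw [if_pos hw, if_pos hdl]
    have hga : w.getLast? = w[m]? := by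
      rw [List.getLast?_eq_getElem?, hw]; simp
    have hda : w.dropLast[a]? = w[a]? := dropLast_getElem?' _ _ (by omega)
    by_cases he : w[m]? = w[a]?
    · rw [if_pos ⟨by omega, by omega, by rw [hga, he, hda]⟩]
      congr 1
      apply propext
      constructor
      · intro H j hj hne
        rcases Nat.lt_or_ge (j : ℕ) m with h' | h'
        · have hdj : (d j : ℕ) ≤ (j : ℕ) := Fin.le_def.mp (hd j)
          have := H j h' hne
          rwa [dropLast_getElem?' _ _ (by omega), dropLast_getElem?' _ _ (by omega)] at this
        · have hjm : j = ⟨m, hmn⟩ := Fin.ext (by simpa using by omega)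
          subst hjm
          rw [← ha]
          exact he.symm
      · intro H j hj hne
        have hdj : (d j : ℕ) ≤ (j : ℕ) := Fin.le_def.mp (hd j)
        rw [dropLast_getElem?' _ _ (by omega), dropLast_getElem?' _ _ (by omega)]
        exact H j (by omega) hne
    · rw [if_neg (fun hc => he (by rw [← hga, hc.2.2, hda]))]
      rw [if_neg]
      intro H
      have hne : d ⟨m, hmn⟩ ≠ ⟨m, hmn⟩ := by
        intro hc
        have hvm : (d ⟨m, hmn⟩ : ℕ) = m := by rw [hc]
        omega
      have := H ⟨m, hmn⟩ (by simpa using by omega) hne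
      rw [← ha] at this
      exact he this.symm
  · rw [if_neg hw]
    by_cases hc : 1 ≤ a + 1 ∧ a + 1 + 1 ≤ w.length ∧ w.getLast? = w.dropLast[a]?
    · rw [if_pos hc, if_neg (by simp only [List.length_dropLast]; have := hc.2.1; omega)]
    · rw [if_neg hc]

lemma Pd_one {n : ℕ} (d : Fin (n + 1) → Fin (n + 1)) (hd : ∀ j, d j ≤ j) : Pd d 1 = p1 := by
  funext w
  unfold Pd p1
  by_cases hw : w.length = 1
  · rw [if_pos hw, if_pos hw, if_pos]
    intro j hj hne
    have hdj : (d j : ℕ) ≤ (j : ℕ) := Fin.le_def.mp (hd j)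
    exact absurd (Fin.ext (by omega : (d j : ℕ) = (j : ℕ))) hne
  · rw [if_neg hw, if_neg hw]

lemma fold_take {n : ℕ} (d : Fin (n + 1) → Fin (n + 1)) (hd : ∀ j, d j ≤ j) :
    ∀ k, 1 ≤ k → k ≤ n + 1 →
      ((List.finRange (n + 1)).take k).foldl
        (fun (g : NCS) (v : Fin (n + 1)) => if (v : ℕ) = 0 then g
          else induceFull g ((d v : ℕ) + 1) ((v : ℕ) + 1)) p1 = Pd d k := by
  intro k
  induction k with
  | zero => omega
  | succ k ih =>
    intro _ hk
    have hkn : k < n + 1 := by omega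
    have htake : (List.finRange (n + 1)).take (k + 1)
        = (List.finRange (n + 1)).take k ++ [(⟨k, hkn⟩ : Fin (n + 1))] := by
      rw [List.take_succ]
      congr 1
      rw [List.getElem?_eq_getElem (by simpa using hkn)]
      simp [List.getElem_finRange, Fin.cast]
    by_cases hk1 : k = 0
    · subst hk1
      rw [htake]
      simp only [List.take_zero, List.nil_append, List.foldl_cons, List.foldl_nil]
      rw [if_pos trivial]
      exact (Pd_one d hd).symm
    · rw [htake, List.foldl_append, ih (by omega) (by omega)]
      simp only [List.foldl_cons, List.foldl_nil]
      rw [if_neg (by simpa using hk1)]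
      unfold induceFull
      by_cases hdm : (d ⟨k, hkn⟩ : ℕ) = k
      · rw [if_pos (by simpa using by omega)]
        exact step_ncMul d hd k hkn (Fin.ext (by simpa using hdm))
      · have hlt : (d ⟨k, hkn⟩ : ℕ) < k := by
          have := Fin.le_def.mp (hd ⟨k, hkn⟩)
          simp only [Fin.val_mk] at this
          omega
        rw [if_neg (by simpa using by omega)]
        exact step_induce d hd k hkn hlt

lemma Pd_eq_pSP {n : ℕ} (d : Fin (n + 1) → Fin (n + 1)) (hd : ∀ j, d j ≤ j) :
    Pd d (n + 1) = pSP (n + 1) (piD d) := by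
  funext w
  unfold Pd pSP piD
  by_cases hw : w.length = n + 1
  · rw [dif_pos hw, if_pos hw]
    have hget : ∀ j : Fin (n + 1), w[(j : ℕ)]? = some (w.get (Fin.cast hw.symm j)) := by
      intro j
      rw [List.getElem?_eq_getElem (by omega)]
      rfl
    congr 1
    apply propext
    constructor
    · intro H
      have key : ∀ a b : Fin (n + 1), Relation.EqvGen (fun a b => d b = a ∧ a ≠ b) a b →
          w.get (Fin.cast hw.symm a) = w.get (Fin.cast hw.symm b) := by
        intro a b hab
        induction hab with
        | rel a b h =>
          have hne : d b ≠ b := fun hc => h.2 (h.1.symm.trans hc)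
          have := H b (Fin.is_lt b) hne
          rw [hget (d b), hget b, h.1] at this
          exact Option.some.inj this
        | refl => rfl
        | symm _ _ _ ih => exact ih.symm
        | trans _ _ _ _ _ ih1 ih2 => exact ih1.trans ih2
      exact fun j k hr => key j k hr
    · intro H j hj hne
      have hr : Relation.EqvGen (fun a b => d b = a ∧ a ≠ b) (d j) j :=
        Relation.EqvGen.rel _ _ ⟨rfl, hne⟩
      have := H (d j) j hr
      rw [hget (d j), hget j]
      exact congrArg some this
  · rw [if_neg hw, dif_neg hw]

/-- `p₁↑_D = p_{π(D)}`; consequently two arc diagrams with the same connected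
components induce the same series from `e₁ = p₁`. -/
theorem induceSeq_powerSum (n : ℕ) :
    (∀ d : Fin (n + 1) → Fin (n + 1), (∀ j, d j ≤ j) →
      induceSeq d p1 = pSP (n + 1) (piD d)) ∧
    (∀ d₁ d₂ : Fin (n + 1) → Fin (n + 1), (∀ j, d₁ j ≤ j) → (∀ j, d₂ j ≤ j) →
      piD d₁ = piD d₂ → induceSeq d₁ p1 = induceSeq d₂ p1) := by
  have main : ∀ d : Fin (n + 1) → Fin (n + 1), (∀ j, d j ≤ j) →
      induceSeq d p1 = pSP (n + 1) (piD d) := by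
    intro d hd
    have h := fold_take d hd (n + 1) (by omega) le_rfl
    rw [List.take_of_length_le (by simp)] at h
    unfold induceSeq
    exact h.trans (Pd_eq_pSP d hd)
  exact ⟨main, fun d₁ d₂ h₁ h₂ hpi => by rw [main d₁ h₁, main d₂ h₂, hpi]⟩
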